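/- Let m ≥ 1, a₀ > 0, a ∈ ℝ^m, f(x) = a₀ + ⟨a,x⟩, and T(x) = x/f(x). Let Δ ⊆ ℝ^m be a Lebesgue-measurable set on which f is strictly positive. Then for every measurable function g : ℝ^m → [0,∞], ∫_{T(Δ)} g(y) dλ(y) = ∫_{Δ} g(T(x)) · (a₀/f(x)^{m+1}) dλ(x), where λ is Lebesgue measure on ℝ^m. (This expresses the pull-back relation T*(dx) = f(0)·f̃^{-(m+1)} dx̃ for the twist map.) -/

import Mathlib

/-!
The twist map `T x = f(x)⁻¹ • x`, with `f = a₀ + φ` affine and `a₀ ≠ 0`, is injective on `{f ≠ 0}`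
because it has a left inverse there which is again a twist map, namely the one for `a₀⁻¹ - a₀⁻¹ φ`.
Its derivative `f(x)⁻¹ • (id - f(x)⁻¹ • φ(·) x)` is a scalar times a rank-one perturbation of the
identity, so its determinant is `f(x)⁻ᵐ (1 - φ x / f(x)) = a₀ / f(x)ᵐ⁺¹`, and the claim is the
change of variables formula for injective differentiable maps.
-/

open MeasureTheory Module

theorem LinearMap.det_id_add_smulRight {R M : Type*} [CommRing R] [AddCommGroup M] [Module R M]
    [Module.Free R M] [Module.Finite R M] (φ : M →ₗ[R] R) (v : M) :
    LinearMap.det (LinearMap.id + φ.smulRight v) = 1 + φ v := by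
  classical
  let b := Module.Free.chooseBasis R M
  rw [← LinearMap.det_toMatrix b, map_add, LinearMap.toMatrix_id, LinearMap.toMatrix_smulRight,
    Matrix.vecMulVec_eq Unit, Matrix.det_one_add_replicateCol_mul_replicateRow, dotProduct_comm]
  congr 1
  conv_rhs => rw [← b.sum_repr v]
  simp only [dotProduct, Function.comp_apply, map_sum, map_smul, smul_eq_mul]

section Twist

variable {E : Type*} [NormedAddCommGroup E] [NormedSpace ℝ E] (a₀ : ℝ) (φ : E →L[ℝ] ℝ)

noncomputable def twist (x : E) : E := (a₀ + φ x)⁻¹ • x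

variable {a₀ φ}

theorem twist_leftInvOn (ha₀ : a₀ ≠ 0) :
    Set.LeftInvOn (twist a₀⁻¹ (-a₀⁻¹ • φ)) (twist a₀ φ) {x | a₀ + φ x ≠ 0} := by
  intro x (hx : a₀ + φ x ≠ 0)
  have hscale : a₀⁻¹ + (-a₀⁻¹ • φ) (twist a₀ φ x) = (a₀ + φ x)⁻¹ := by
    simp only [twist, map_smul, smul_apply, smul_eq_mul]
    field_simp
    ring
  rw [twist, hscale, twist, inv_inv, smul_inv_smul₀ hx]

theorem hasFDerivAt_twist {x : E} (hx : a₀ + φ x ≠ 0) :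
    HasFDerivAt (twist a₀ φ)
      ((a₀ + φ x)⁻¹ • (ContinuousLinearMap.id ℝ E + (-(a₀ + φ x)⁻¹ • φ).smulRight x)) x := by
  have hinv : HasFDerivAt (fun y => (a₀ + φ y)⁻¹) (-(((a₀ + φ x) ^ 2)⁻¹ • φ)) x := by
    simpa [Function.comp_def] using
      (hasDerivAt_inv hx).comp_hasFDerivAt x (φ.hasFDerivAt.const_add a₀)
  refine (hinv.smul (hasFDerivAt_id x)).congr_fderiv ?_
  ext v
  simp [smul_smul, sq, mul_assoc]

theorem det_fderiv_twist [FiniteDimensional ℝ E] {x : E} (hx : a₀ + φ x ≠ 0) :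
    (fderiv ℝ (twist a₀ φ) x).det = a₀ / (a₀ + φ x) ^ (finrank ℝ E + 1) := by
  rw [(hasFDerivAt_twist hx).fderiv, ContinuousLinearMap.det,
    ContinuousLinearMap.toLinearMap_smul, LinearMap.det_smul, ContinuousLinearMap.toLinearMap_add,
    ContinuousLinearMap.coe_id, ContinuousLinearMap.coe_smulRight, LinearMap.det_id_add_smulRight]
  simp only [ContinuousLinearMap.toLinearMap_smul, LinearMap.smul_apply,
    ContinuousLinearMap.coe_coe, smul_eq_mul, inv_pow]
  field_simp
  ring

theorem lintegral_image_twist [FiniteDimensional ℝ E] [MeasurableSpace E] [BorelSpace E]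
    (μ : Measure E) [μ.IsAddHaarMeasure] (ha₀ : a₀ ≠ 0) {s : Set E} (hs : MeasurableSet s)
    (hfs : ∀ x ∈ s, a₀ + φ x ≠ 0) (g : E → ENNReal) :
    ∫⁻ y in twist a₀ φ '' s, g y ∂μ =
      ∫⁻ x in s, ENNReal.ofReal |a₀ / (a₀ + φ x) ^ (finrank ℝ E + 1)| * g (twist a₀ φ x) ∂μ := by
  rw [lintegral_image_eq_lintegral_abs_det_fderiv_mul μ hs
    (fun x hx => (hasFDerivAt_twist (hfs x hx)).differentiableAt.hasFDerivAt.hasFDerivWithinAt)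
    ((twist_leftInvOn ha₀).injOn.mono hfs)]
  exact setLIntegral_congr_fun hs fun x hx => by rw [det_fderiv_twist (hfs x hx)]

end Twist

theorem stmt5_general (m : ℕ) (a₀ : ℝ) (ha₀ : 0 < a₀) (a : Fin m → ℝ)
    (f : (Fin m → ℝ) → ℝ) (hf : ∀ x, f x = a₀ + ∑ i, a i * x i)
    (T : (Fin m → ℝ) → (Fin m → ℝ)) (hT : ∀ x, T x = (f x)⁻¹ • x)
    (Δ : Set (Fin m → ℝ)) (hΔ : MeasurableSet Δ)
    (hfΔ : ∀ x ∈ Δ, 0 < f x)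
    (g : (Fin m → ℝ) → ENNReal) :
    ∫⁻ y in T '' Δ, g y ∂volume =
      ∫⁻ x in Δ, g (T x) * ENNReal.ofReal (a₀ / (f x) ^ (m + 1)) ∂volume := by
  let φ : (Fin m → ℝ) →L[ℝ] ℝ := ∑ i, a i • ContinuousLinearMap.proj i
  have hfφ : ∀ x, f x = a₀ + φ x := fun x => by simp [hf, φ]
  have hTφ : T = twist a₀ φ := funext fun x => by rw [hT, hfφ, twist]
  rw [hTφ, lintegral_image_twist volume ha₀.ne' hΔ fun x hx => (hfφ x ▸ hfΔ x hx).ne']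
  refine setLIntegral_congr_fun hΔ fun x hx => ?_
  rw [finrank_fin_fun, ← hfφ, abs_of_pos (by have := hfΔ x hx; positivity), mul_comm]

/-- Change of variables for the f-twist map T(x) = x/f(x): for a
measurable set Δ on which f(x) = a₀ + ⟨a,x⟩ (a₀ > 0) is strictly positive, and
any measurable g : ℝ^m → [0,∞],
∫_{T(Δ)} g dλ = ∫_Δ g(T x)·(a₀/f(x)^{m+1}) dλ(x). -/
theorem stmt5 (m : ℕ) (hm : 1 ≤ m) (a₀ : ℝ) (ha₀ : 0 < a₀) (a : Fin m → ℝ)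
    (f : (Fin m → ℝ) → ℝ) (hf : ∀ x, f x = a₀ + ∑ i, a i * x i)
    (T : (Fin m → ℝ) → (Fin m → ℝ)) (hT : ∀ x, T x = (f x)⁻¹ • x)
    (Δ : Set (Fin m → ℝ)) (hΔ : MeasurableSet Δ)
    (hfΔ : ∀ x ∈ Δ, 0 < f x)
    (g : (Fin m → ℝ) → ENNReal) (hg : Measurable g) :
    ∫⁻ y in T '' Δ, g y ∂volume =
      ∫⁻ x in Δ, g (T x) * ENNReal.ofReal (a₀ / (f x) ^ (m + 1)) ∂volume :=
  stmt5_general m a₀ ha₀ a f hf T hT Δ hΔ hfΔ g
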